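/- arXiv:2006.10641 — 2 statements merged into one kernel-verified Lean document; each statement's English description precedes it below -/
import Mathlib

section
/- Let 𝒳 be a finite alphabet and 𝒰 a utility with zero diagonal. Let 𝒴 ⊆ 𝒳 and suppose for all K ∈ ℕ the uniform type class T_𝒴^K is an independent set in the sender graph G_s^{K|𝒴|}. Then Ξ(𝒰) = lim_n α(G_sⁿ)^{1/n} ≥ |𝒴|. -/
open Finset Filter Real Topology

/-- Sender graph induced by utility `U` on `n`-length sequences: distinct `x, y`
are adjacent iff the total (equivalently, average) utility is nonnegative in one direction. -/
def senderGraph {X : Type*} (U : X → X → ℝ) (n : ℕ) : SimpleGraph (Fin n → X) where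
  Adj x y := x ≠ y ∧ (0 ≤ ∑ k, U (y k) (x k) ∨ 0 ≤ ∑ k, U (x k) (y k))
  symm := ⟨fun x y h => ⟨h.1.symm, h.2.symm⟩⟩
  loopless := ⟨fun x h => h.1 rfl⟩

/-- Base sender graph on the alphabet itself. -/
def baseGraph {X : Type*} (U : X → X → ℝ) : SimpleGraph X where
  Adj i j := i ≠ j ∧ (0 ≤ U i j ∨ 0 ≤ U j i)
  symm := ⟨fun i j h => ⟨h.1.symm, h.2.symm⟩⟩
  loopless := ⟨fun i h => h.1 rfl⟩

/-- `n`-fold strong product (strong power) of a graph. -/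
def strongPow {V : Type*} (G : SimpleGraph V) (n : ℕ) : SimpleGraph (Fin n → V) where
  Adj x y := x ≠ y ∧ ∀ k, x k = y k ∨ G.Adj (x k) (y k)
  symm := ⟨fun x y h => ⟨h.1.symm, fun k => (h.2 k).imp Eq.symm SimpleGraph.Adj.symm⟩⟩
  loopless := ⟨fun x h => h.1 rfl⟩

/-- Independence number of a graph: the largest size of a set of pairwise
non-adjacent vertices. -/
noncomputable def indepNum {V : Type*} (G : SimpleGraph V) : ℕ :=
  sSup {m | ∃ s : Finset V, s.card = m ∧ ∀ x ∈ s, ∀ y ∈ s, ¬ G.Adj x y}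

/-- The sequence `n ↦ α(G_s^n)^{1/n}` whose limit is the information
extraction capacity `Ξ(U)`. -/
noncomputable def capSeq {X : Type*} (U : X → X → ℝ) (n : ℕ) : ℝ :=
  (indepNum (senderGraph U n) : ℝ) ^ (1 / (n : ℝ))

/-!
Since `T_Y^K` is independent, `α(G_s^{K|Y|}) ≥ |T_Y^K| = (K|Y|)! / (K!)^{|Y|}`, the multinomial
count coming from orbit-stabilizer for the action of coordinate permutations. The Stirling-type
bounds `(n/e)^n ≤ n!` and `K! ≤ e √K (K/e)^K` give `|T_Y^K| ≥ |Y|^{K|Y|} / (eK)^{|Y|}`, hence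
`α(G_s^{K|Y|})^{1/(K|Y|)} ≥ |Y| / (eK)^{1/K}`, and the right side tends to `|Y|`.
-/

open scoped Nat

theorem card_le_indepNum {V : Type*} [Fintype V] (G : SimpleGraph V) {s : Finset V}
    (hs : ∀ x ∈ s, ∀ y ∈ s, ¬ G.Adj x y) : #s ≤ indepNum G :=
  le_csSup ⟨Fintype.card V, by rintro _ ⟨t, rfl, -⟩; exact card_le_univ t⟩ ⟨s, rfl, hs⟩

open Equiv MulAction in
theorem factorial_card_eq_ncard_orbit_mul_prod {α ι : Type*} [Fintype α] [DecidableEq α]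
    [Fintype ι] [DecidableEq ι] (f : α → ι) :
    (Fintype.card α)! = (orbit (Perm α)ᵈᵐᵃ f).ncard * ∏ i, (Fintype.card {a // f a = i})! := by
  have hstab : Nat.card (stabilizer (Perm α)ᵈᵐᵃ f) = ∏ i, (Fintype.card {a // f a = i})! := by
    rw [← DomMulAct.stabilizer_card, ← Nat.card_eq_fintype_card]
    exact Nat.card_congr (Equiv.subtypeEquiv DomMulAct.mk fun _ => Iff.rfl).symm
  rw [← Fintype.card_perm, ← Nat.card_eq_fintype_card, ← index_stabilizer, ← hstab, mul_comm,
    Subgroup.card_mul_index]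
  exact Nat.card_congr DomMulAct.mk

section UniformTypeClass

variable {X : Type*} [Fintype X] [DecidableEq X] (Y : Finset X) (K : ℕ)

def uniformTypeClass : Finset (Fin (K * #Y) → X) :=
  univ.filter fun x => (∀ k, x k ∈ Y) ∧ ∀ a ∈ Y, #{k | x k = a} = K

variable {Y K}

theorem mem_uniformTypeClass {x : Fin (K * #Y) → X} :
    x ∈ uniformTypeClass Y K ↔ (∀ k, x k ∈ Y) ∧ ∀ a ∈ Y, #{k | x k = a} = K := by
  simp [uniformTypeClass]

theorem comp_perm_mem_uniformTypeClass {x : Fin (K * #Y) → X} (hx : x ∈ uniformTypeClass Y K)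
    (σ : Equiv.Perm (Fin (K * #Y))) : x ∘ σ ∈ uniformTypeClass Y K := by
  rw [mem_uniformTypeClass] at hx ⊢
  refine ⟨fun k => hx.1 (σ k), fun a ha => ?_⟩
  exact (card_equiv σ (by simp)).trans (hx.2 a ha)

variable (Y K)

theorem uniformTypeClass_nonempty : (uniformTypeClass Y K).Nonempty := by
  let e : Fin (K * #Y) ≃ Fin K × Y :=
    finProdFinEquiv.symm.trans (Equiv.prodCongr (Equiv.refl _) Y.equivFin.symm)
  refine ⟨fun k => (e k).2, mem_uniformTypeClass.2 ⟨fun k => (e k).2.2, fun a ha => ?_⟩⟩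
  calc #{k | ((e k).2 : X) = a} = #{p : Fin K × Y | (p.2 : X) = a} := card_equiv e (by simp)
    _ = #(univ ×ˢ {(⟨a, ha⟩ : Y)}) := by
      congr 1; ext p
      simp only [mem_filter, mem_univ, true_and, mem_product, mem_singleton, Subtype.ext_iff]
    _ = K := by simp

theorem factorial_le_factorial_pow_mul_card_uniformTypeClass :
    (K * #Y)! ≤ K ! ^ #Y * #(uniformTypeClass Y K) := by
  obtain ⟨x, hx⟩ := uniformTypeClass_nonempty Y K
  have hfiber : ∏ a, (Fintype.card {k // x k = a})! = K ! ^ #Y := by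
    rw [← prod_const, ← prod_subset (subset_univ Y)]
    · exact prod_congr rfl fun a ha => by
        rw [Fintype.card_subtype, (mem_uniformTypeClass.1 hx).2 a ha]
    · intro a _ ha
      rw [Fintype.card_subtype, Finset.card_eq_zero.2, Nat.factorial_zero]
      exact filter_eq_empty_iff.2 fun k _ hk => ha (hk ▸ (mem_uniformTypeClass.1 hx).1 k)
  have horbit :
      (MulAction.orbit (Equiv.Perm (Fin (K * #Y)))ᵈᵐᵃ x).ncard ≤ #(uniformTypeClass Y K) := by
    refine (Set.ncard_le_ncard ?_).trans (Set.ncard_coe_finset _).le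
    rintro _ ⟨σ, rfl⟩
    exact comp_perm_mem_uniformTypeClass hx _
  calc (K * #Y)! = (Fintype.card (Fin (K * #Y)))! := by rw [Fintype.card_fin]
    _ = _ := factorial_card_eq_ncard_orbit_mul_prod x
    _ ≤ K ! ^ #Y * #(uniformTypeClass Y K) := by rw [hfiber, mul_comm]; gcongr

end UniformTypeClass

theorem pow_div_exp_one_le_factorial (n : ℕ) : ((n : ℝ) / exp 1) ^ n ≤ n ! := by
  have h := pow_div_factorial_le_exp (n : ℝ) n.cast_nonneg n
  rw [div_le_iff₀ (by positivity), ← exp_one_pow] at h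
  rw [div_pow, div_le_iff₀ (by positivity)]
  linarith

theorem factorial_le_exp_one_mul_sqrt_mul_pow {n : ℕ} (hn : n ≠ 0) :
    (n ! : ℝ) ≤ exp 1 * √n * (n / exp 1) ^ n := by
  have h : Stirling.stirlingSeq n ≤ Stirling.stirlingSeq 1 := by
    obtain ⟨k, rfl⟩ := Nat.exists_eq_succ_of_ne_zero hn
    exact Stirling.stirlingSeq'_antitone k.zero_le
  rw [Stirling.stirlingSeq_one, Stirling.stirlingSeq, div_le_iff₀ (by positivity)] at h
  calc (n ! : ℝ) ≤ exp 1 / √2 * (√(2 * n) * (n / exp 1) ^ n) := h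
    _ = exp 1 * √n * (n / exp 1) ^ n := by
      rw [sqrt_mul zero_le_two]; field_simp

theorem pow_le_exp_one_mul_pow_mul_factorial_div {K : ℕ} (hK : K ≠ 0) (m : ℕ) :
    (m : ℝ) ^ (K * m) ≤ (exp 1 * K) ^ m * ((K * m)! / (K ! : ℝ) ^ m) := by
  have hKm : ((K * m : ℕ) : ℝ) / exp 1 = m * (K / exp 1) := by push_cast; ring
  have hfact : (K ! : ℝ) ≤ exp 1 * K * (K / exp 1) ^ K := by
    refine (factorial_le_exp_one_mul_sqrt_mul_pow hK).trans ?_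
    gcongr
    exact sqrt_le_self_iff.2 (Or.inr (by exact_mod_cast Nat.one_le_iff_ne_zero.2 hK))
  rw [mul_div_assoc', le_div_iff₀ (by positivity)]
  calc (m : ℝ) ^ (K * m) * (K ! : ℝ) ^ m
      ≤ m ^ (K * m) * (exp 1 * K * (K / exp 1) ^ K) ^ m := by gcongr
    _ = (exp 1 * K) ^ m * (((K * m : ℕ) : ℝ) / exp 1) ^ (K * m) := by
      rw [hKm]; ring
    _ ≤ (exp 1 * K) ^ m * (K * m)! := by gcongr; exact pow_div_exp_one_le_factorial _

theorem tendsto_const_mul_rpow_one_div {c : ℝ} (hc : 0 < c) :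
    Tendsto (fun n : ℕ => (c * n) ^ (1 / (n : ℝ))) atTop (𝓝 1) := by
  have hconst : Tendsto (fun n : ℕ => c ^ (1 / (n : ℝ))) atTop (𝓝 1) := by
    simpa using tendsto_const_nhds.rpow tendsto_one_div_atTop_nhds_zero_nat (Or.inl hc.ne')
  have hself : Tendsto (fun n : ℕ => (n : ℝ) ^ (1 / (n : ℝ))) atTop (𝓝 1) :=
    tendsto_rpow_div.comp tendsto_natCast_atTop_atTop
  simpa using (hconst.mul hself).congr fun n => (mul_rpow hc.le n.cast_nonneg).symm

theorem div_rpow_one_div_le_rpow_one_div {a c N : ℝ} {K m : ℕ} (ha : 0 ≤ a) (hc : 0 < c)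
    (hKm : K * m ≠ 0) (h : a ^ (K * m) ≤ c ^ m * N) :
    a / c ^ (1 / (K : ℝ)) ≤ N ^ (1 / ((K * m : ℕ) : ℝ)) := by
  have hpos : (0 : ℝ) < (K * m : ℕ) := by exact_mod_cast Nat.pos_of_ne_zero hKm
  have hN : 0 ≤ N := nonneg_of_mul_nonneg_right (h.trans' (by positivity)) (by positivity)
  have hexp : (K : ℝ)⁻¹ * (K * m : ℕ) = m := by
    push_cast
    field_simp [show (K : ℝ) ≠ 0 by exact_mod_cast left_ne_zero_of_mul hKm]
  rw [one_div, one_div, le_rpow_inv_iff_of_pos (by positivity) hN hpos,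
    div_rpow ha (by positivity), ← rpow_mul hc.le, hexp, div_le_iff₀ (by positivity),
    rpow_natCast, rpow_natCast, mul_comm N]
  exact h

theorem pow_le_mul_card_uniformTypeClass {X : Type*} [Fintype X] [DecidableEq X] (Y : Finset X)
    {K : ℕ} (hK : K ≠ 0) :
    (#Y : ℝ) ^ (K * #Y) ≤ (exp 1 * K) ^ #Y * #(uniformTypeClass Y K) := by
  refine (pow_le_exp_one_mul_pow_mul_factorial_div hK _).trans ?_
  gcongr
  rw [div_le_iff₀' (by positivity)]
  exact_mod_cast factorial_le_factorial_pow_mul_card_uniformTypeClass Y K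

theorem capacity_ge_card_of_typeClass_indep_general {X : Type*} [Fintype X] [DecidableEq X]
    (U : X → X → ℝ) (Y : Finset X)
    (hT : ∀ K : ℕ, ∀ x y : Fin (K * Y.card) → X,
        ((∀ k, x k ∈ Y) ∧ ∀ a ∈ Y, (Finset.univ.filter fun k => x k = a).card = K) →
        ((∀ k, y k ∈ Y) ∧ ∀ a ∈ Y, (Finset.univ.filter fun k => y k = a).card = K) →
        ¬ (senderGraph U (K * Y.card)).Adj x y)
    (L : ℝ) (hL : Filter.Tendsto (capSeq U) Filter.atTop (nhds L)) :
    (Y.card : ℝ) ≤ L := by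
  obtain hY | hY := eq_or_ne #Y 0
  · rw [hY, Nat.cast_zero]
    exact ge_of_tendsto' hL fun n => rpow_nonneg (Nat.cast_nonneg _) _
  have hbound (K : ℕ) (hK : K ≠ 0) :
      #Y / (exp 1 * K) ^ (1 / (K : ℝ)) ≤ capSeq U (K * #Y) := by
    have hindep : #(uniformTypeClass Y K) ≤ indepNum (senderGraph U (K * #Y)) :=
      card_le_indepNum _ fun x hx y hy =>
        hT K x y (mem_uniformTypeClass.1 hx) (mem_uniformTypeClass.1 hy)
    refine (div_rpow_one_div_le_rpow_one_div (Nat.cast_nonneg _) (by positivity)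
      (mul_ne_zero hK hY) (pow_le_mul_card_uniformTypeClass Y hK)).trans ?_
    exact rpow_le_rpow (Nat.cast_nonneg _) (by exact_mod_cast hindep) (by positivity)
  have hlim : Tendsto (fun K : ℕ => #Y / (exp 1 * K) ^ (1 / (K : ℝ))) atTop (𝓝 #Y) := by
    have h := (tendsto_const_nhds (x := (#Y : ℝ))).div
      (tendsto_const_mul_rpow_one_div (exp_pos 1)) one_ne_zero
    rwa [div_one] at h
  exact le_of_tendsto_of_tendsto hlim
    (hL.comp (tendsto_id.atTop_mul_const' (Nat.pos_of_ne_zero hY)))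
    ((eventually_ne_atTop 0).mono hbound)

/-- If for every `K` the uniform type class `T_Y^K` is an independent set in the
sender graph `G_s^{K|Y|}`, then `Ξ(U) ≥ |Y|`. -/
theorem capacity_ge_card_of_typeClass_indep {X : Type*} [Fintype X] [DecidableEq X]
    (U : X → X → ℝ) (hdiag : ∀ i, U i i = 0) (Y : Finset X)
    (hT : ∀ K : ℕ, ∀ x y : Fin (K * Y.card) → X,
        ((∀ k, x k ∈ Y) ∧ ∀ a ∈ Y, (Finset.univ.filter fun k => x k = a).card = K) →
        ((∀ k, y k ∈ Y) ∧ ∀ a ∈ Y, (Finset.univ.filter fun k => y k = a).card = K) →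
        ¬ (senderGraph U (K * Y.card)).Adj x y)
    (L : ℝ) (hL : Filter.Tendsto (capSeq U) Filter.atTop (nhds L)) :
    (Y.card : ℝ) ≤ L :=
  capacity_ge_card_of_typeClass_indep_general U Y hT L hL
end

section
/- Let 𝒰 be a utility taking only the two values a and −b on off-diagonal entries, where a, b > 0 and a ≥ b, and 𝒰(i,i) = 0. Let G_s be the base sender graph (i ∼ j iff 𝒰(i,j) = a or 𝒰(j,i) = a). Then for every n, if distinct x, y ∈ 𝒳ⁿ are non-adjacent in the sender graph G_sⁿ, they are non-adjacent in G_s^{⊠n}; hence α(G_sⁿ) ≤ α(G_s^{⊠n}) and Ξ(𝒰) ≤ Θ(G_s). -/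
open Finset Filter Real Topology

/-! If `x` and `y` are adjacent in the strong power then in every coordinate either `xₖ = yₖ` or
`xₖ ∼ yₖ` in the base graph, and for a two-valued utility with `b ≤ a` both cases give
`𝒰(xₖ, yₖ) + 𝒰(yₖ, xₖ) ≥ 0`. Summing over `k`, one of the two total utilities is nonnegative, so
`x ∼ y` in the sender graph. The strong power is thus a subgraph of the sender graph, and
independence numbers and their `n`-th roots compare the other way. -/

theorem strongPow_le_senderGraph {X : Type*} (U : X → X → ℝ) (hdiag : ∀ i, 0 ≤ U i i)
    (hadj : ∀ i j, (baseGraph U).Adj i j → 0 ≤ U i j + U j i) (n : ℕ) :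
    strongPow (baseGraph U) n ≤ senderGraph U n := by
  intro x y ⟨hxy, hcoord⟩
  have hsum : 0 ≤ ∑ k, (U (y k) (x k) + U (x k) (y k)) := by
    refine sum_nonneg fun k _ => ?_
    rcases hcoord k with h | h
    · rw [h]; linarith [hdiag (y k)]
    · exact hadj _ _ h.symm
  rw [sum_add_distrib] at hsum
  refine ⟨hxy, ?_⟩
  by_contra! h
  linarith [h.1, h.2]

theorem add_nonneg_of_baseGraph_adj {X : Type*} {U : X → X → ℝ} {a b : ℝ} (hab : b ≤ a)
    (hval : ∀ i j : X, i ≠ j → U i j = a ∨ U i j = -b) {i j : X} (h : (baseGraph U).Adj i j) :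
    0 ≤ U i j + U j i := by
  obtain ⟨hij, hnonneg⟩ := h
  rcases hval i j hij with hi | hi <;> rcases hval j i hij.symm with hj | hj <;>
    rw [hi, hj] at hnonneg ⊢ <;> rcases hnonneg with h | h <;> linarith

theorem indepNum_anti {V : Type*} [Fintype V] {G H : SimpleGraph V} (hGH : G ≤ H) :
    indepNum H ≤ indepNum G := by
  apply csSup_le_csSup
  · exact ⟨Fintype.card V, fun m ⟨s, hs, _⟩ => hs ▸ card_le_univ s⟩
  · exact ⟨0, ∅, rfl, by simp⟩
  · rintro m ⟨s, hs, hind⟩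
    exact ⟨s, hs, fun x hx y hy hxy => hind x hx y hy (hGH hxy)⟩

theorem capacity_le_shannon_of_two_valued_general {X : Type*} [Fintype X]
    (U : X → X → ℝ) (hdiag : ∀ i, U i i = 0) (a b : ℝ)
    (hab : b ≤ a)
    (hval : ∀ i j : X, i ≠ j → U i j = a ∨ U i j = -b) :
    (∀ n, ∀ x y : Fin n → X, x ≠ y → ¬ (senderGraph U n).Adj x y →
      ¬ (strongPow (baseGraph U) n).Adj x y) ∧
    (∀ n, indepNum (senderGraph U n) ≤ indepNum (strongPow (baseGraph U) n)) ∧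
    ∀ L Th : ℝ, Filter.Tendsto (capSeq U) Filter.atTop (nhds L) →
      Filter.Tendsto
        (fun n : ℕ => (indepNum (strongPow (baseGraph U) n) : ℝ) ^ (1 / (n : ℝ)))
        Filter.atTop (nhds Th) → L ≤ Th := by
  have hle (n : ℕ) : strongPow (baseGraph U) n ≤ senderGraph U n :=
    strongPow_le_senderGraph U (fun i => (hdiag i).ge)
      (fun _ _ h => add_nonneg_of_baseGraph_adj hab hval h) n
  have hindep (n : ℕ) := indepNum_anti (hle n)
  refine ⟨fun n x y _ hsender hstrong => hsender (hle n hstrong), hindep,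
    fun L Th hL hTh => le_of_tendsto_of_tendsto' hL hTh fun n => ?_⟩
  exact rpow_le_rpow (Nat.cast_nonneg _) (by exact_mod_cast hindep n) (by positivity)

/-- If `U` takes only the values `a` and `-b` off the diagonal with
`a ≥ b > 0`, then non-adjacency in the sender graph `G_s^n` implies
non-adjacency in the strong power `G_s^{⊠n}`; hence `α(G_s^n) ≤ α(G_s^{⊠n})`
and `Ξ(U) ≤ Θ(G_s)`. -/
theorem capacity_le_shannon_of_two_valued {X : Type*} [Fintype X]
    (U : X → X → ℝ) (hdiag : ∀ i, U i i = 0) (a b : ℝ)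
    (ha : 0 < a) (hb : 0 < b) (hab : b ≤ a)
    (hval : ∀ i j : X, i ≠ j → U i j = a ∨ U i j = -b) :
    (∀ n, ∀ x y : Fin n → X, x ≠ y → ¬ (senderGraph U n).Adj x y →
      ¬ (strongPow (baseGraph U) n).Adj x y) ∧
    (∀ n, indepNum (senderGraph U n) ≤ indepNum (strongPow (baseGraph U) n)) ∧
    ∀ L Th : ℝ, Filter.Tendsto (capSeq U) Filter.atTop (nhds L) →
      Filter.Tendsto
        (fun n : ℕ => (indepNum (strongPow (baseGraph U) n) : ℝ) ^ (1 / (n : ℝ)))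
        Filter.atTop (nhds Th) → L ≤ Th :=
  capacity_le_shannon_of_two_valued_general U hdiag a b hab hval
end
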